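/- Let (A,Q) be a finite quadratic module. Then for every x ∈ A one has S²𝔢_x = ((∑_{z∈A} e(−Q(z)))²/|A|)·𝔢_{−x}; equivalently, for every v ∈ ℂ[A] and a ∈ A, (S²v)(a) = ((∑_{z∈A} e(−Q(z)))²/|A|)·v(−a). Consequently S⁴ is the scalar operator ((∑_{z∈A} e(−Q(z)))²/|A|)²·id. -/

import Mathlib

open Finset

noncomputable def qe (q : AddCircle (1 : ℚ)) : ℂ :=
  Complex.exp (2 * (Real.pi : ℂ) * Complex.I * ((q.out : ℚ) : ℂ))

/-- `(A, Q)` is a finite quadratic module: `Q` is a nondegenerate quadratic form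
with values in `ℚ/ℤ`. -/
def IsFQM {A : Type*} [AddCommGroup A] (Q : A → AddCircle (1 : ℚ)) : Prop :=
  (∀ (n : ℤ) (x : A), Q (n • x) = n ^ 2 • Q x) ∧
  (∀ x x' y : A,
      Q (x + x' + y) - Q (x + x') - Q y =
        (Q (x + y) - Q x - Q y) + (Q (x' + y) - Q x' - Q y)) ∧
  (∀ x : A, (∀ y : A, Q (x + y) - Q x - Q y = 0) → x = 0)

/-- The standard basis vector `𝔢_x` of `ℂ[A]`. -/
noncomputable def indic {A : Type*} [DecidableEq A] (x : A) : A → ℂ :=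
  fun y => if y = x then 1 else 0

/-- The Weil representation operator `T`. -/
noncomputable def weilT {A : Type*} [AddCommGroup A] [Fintype A]
    (Q : A → AddCircle (1 : ℚ)) : (A → ℂ) →ₗ[ℂ] (A → ℂ) where
  toFun v := fun x => qe (Q x) * v x
  map_add' u v := by funext x; simp [mul_add]
  map_smul' c v := by funext x; simp [smul_eq_mul]; ring

/-- The Weil representation operator `S`. -/
noncomputable def weilS {A : Type*} [AddCommGroup A] [Fintype A]
    (Q : A → AddCircle (1 : ℚ)) : (A → ℂ) →ₗ[ℂ] (A → ℂ) where
  toFun v := fun y =>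
    ((Fintype.card A : ℂ)⁻¹ * ∑ z, qe (-(Q z))) *
      ∑ x, qe (-(Q (x + y) - Q x - Q y)) * v x
  map_add' u v := by
    funext y
    simp only [Pi.add_apply, mul_add, Finset.sum_add_distrib]
  map_smul' c v := by
    funext y
    simp only [Pi.smul_apply, smul_eq_mul, RingHom.id_apply, Finset.mul_sum]
    exact Finset.sum_congr rfl fun x _ => by ring

/-- The space of invariants of the Weil representation. -/
noncomputable def weilInv {A : Type*} [AddCommGroup A] [Fintype A]
    (Q : A → AddCircle (1 : ℚ)) : Submodule ℂ (A → ℂ) where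
  carrier := {v | weilS Q v = v ∧ weilT Q v = v}
  add_mem' := by
    rintro u v ⟨hu1, hu2⟩ ⟨hv1, hv2⟩
    exact ⟨by rw [map_add, hu1, hv1], by rw [map_add, hu2, hv2]⟩
  zero_mem' := ⟨map_zero _, map_zero _⟩
  smul_mem' := by
    rintro c v ⟨h1, h2⟩
    exact ⟨by rw [map_smul, h1], by rw [map_smul, h2]⟩

/-- `N` is the level of `(A,Q)`. -/
def IsLvl {A : Type*} [AddCommGroup A] (Q : A → AddCircle (1 : ℚ)) (N : ℕ) : Prop :=
  0 < N ∧ (∀ x, N • Q x = 0) ∧ ∀ M : ℕ, 0 < M → (∀ x, M • Q x = 0) → N ≤ M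

/-! Expanding `S (S v) a` and exchanging the two sums leaves, for each `y`, the character sum
`∑ x, e(-B(x, a + y))`. By nondegeneracy the character `x ↦ e(-B(x, a + y))` is trivial only
for `y = -a`, so orthogonality collapses the sum to `|A| · v(-a)`. Thus `S²` is a scalar multiple
of the reflection `v ↦ v ∘ Neg.neg`, whose square is the identity. -/

lemma qe_coe (r : ℚ) : qe r = Complex.exp (2 * Real.pi * Complex.I * r) := by
  have hout : (((r : AddCircle (1 : ℚ)).out - r : ℚ) : AddCircle (1 : ℚ)) = 0 := by
    rw [QuotientAddGroup.mk_sub, QuotientAddGroup.out_eq', sub_self]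
  obtain ⟨n, hn⟩ := (AddCircle.coe_eq_zero_iff _).mp hout
  rw [qe, Complex.exp_eq_exp_iff_exists_int]
  refine ⟨n, ?_⟩
  rw [zsmul_one, eq_sub_iff_add_eq] at hn
  rw [← hn]
  push_cast
  ring

lemma qe_add (p q : AddCircle (1 : ℚ)) : qe (p + q) = qe p * qe q := by
  induction p using QuotientAddGroup.induction_on
  induction q using QuotientAddGroup.induction_on
  rw [← QuotientAddGroup.mk_add, qe_coe, qe_coe, qe_coe, ← Complex.exp_add]
  push_cast
  ring_nf

lemma qe_eq_one_iff (q : AddCircle (1 : ℚ)) : qe q = 1 ↔ q = 0 := by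
  induction q using QuotientAddGroup.induction_on with | H r => ?_
  rw [qe_coe, Complex.exp_eq_one_iff, AddCircle.coe_eq_zero_iff]
  refine exists_congr fun n => ?_
  rw [zsmul_one, mul_comm _ (2 * Real.pi * Complex.I : ℂ),
    mul_right_inj' Complex.two_pi_I_ne_zero]
  exact_mod_cast eq_comm

noncomputable def qeChar : AddChar (AddCircle (1 : ℚ)) ℂ where
  toFun := qe
  map_zero_eq_one' := (qe_eq_one_iff 0).mpr rfl
  map_add_eq_mul' := qe_add

lemma sum_qe_eq_ite {A : Type*} [AddCommGroup A] [Fintype A] (f : A →+ AddCircle (1 : ℚ)) :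
    ∑ x, qe (f x) = if f = 0 then (Fintype.card A : ℂ) else 0 := by
  classical
  have hψ : qeChar.compAddMonoidHom f = 0 ↔ f = 0 := by
    simp only [DFunLike.ext_iff, AddChar.compAddMonoidHom_apply, AddMonoidHom.zero_apply]
    exact forall_congr' fun x => qe_eq_one_iff (f x)
  have := (qeChar.compAddMonoidHom f).sum_eq_ite
  simp only [hψ] at this
  exact this

def polar {A : Type*} [AddCommGroup A] (Q : A → AddCircle (1 : ℚ)) (x y : A) :
    AddCircle (1 : ℚ) :=
  Q (x + y) - Q x - Q y

section polar

variable {A : Type*} [AddCommGroup A] {Q : A → AddCircle (1 : ℚ)}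

lemma polar_comm (x y : A) : polar Q x y = polar Q y x := by
  rw [polar, polar, add_comm x y]
  abel

lemma weilS_apply [Fintype A] (v : A → ℂ) (y : A) :
    weilS Q v y =
      ((Fintype.card A : ℂ)⁻¹ * ∑ z, qe (-(Q z))) * ∑ x, qe (-polar Q x y) * v x :=
  rfl

namespace IsFQM

lemma polar_add_left (hQ : IsFQM Q) (x x' y : A) :
    polar Q (x + x') y = polar Q x y + polar Q x' y :=
  hQ.2.1 x x' y

lemma polar_add_right (hQ : IsFQM Q) (x y y' : A) :
    polar Q x (y + y') = polar Q x y + polar Q x y' := by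
  rw [polar_comm, hQ.polar_add_left, polar_comm y, polar_comm y']

lemma map_zero (hQ : IsFQM Q) : Q 0 = 0 := by
  simpa using hQ.1 0 0

def polarHom (hQ : IsFQM Q) (y : A) : A →+ AddCircle (1 : ℚ) :=
  AddMonoidHom.mk' (polar Q · y) (hQ.polar_add_left · · y)

@[simp]
lemma polarHom_apply (hQ : IsFQM Q) (x y : A) : hQ.polarHom y x = polar Q x y :=
  rfl

lemma polarHom_eq_zero_iff (hQ : IsFQM Q) (y : A) : hQ.polarHom y = 0 ↔ y = 0 := by
  refine ⟨fun h => hQ.2.2 y fun x => ?_, ?_⟩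
  · rw [← polar, polar_comm]
    exact DFunLike.congr_fun h x
  · rintro rfl
    ext x
    simp [polar, hQ.map_zero]

lemma sum_qe_neg_polar (hQ : IsFQM Q) [Fintype A] [DecidableEq A] (y : A) :
    ∑ x, qe (-polar Q x y) = if y = 0 then (Fintype.card A : ℂ) else 0 := by
  simpa [neg_eq_zero, hQ.polarHom_eq_zero_iff] using sum_qe_eq_ite (-hQ.polarHom y)

lemma weilS_sq_apply (hQ : IsFQM Q) [Fintype A] (v : A → ℂ) (a : A) :
    weilS Q (weilS Q v) a = ((∑ z, qe (-(Q z))) ^ 2 / (Fintype.card A : ℂ)) * v (-a) := by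
  classical
  set c : ℂ := (Fintype.card A : ℂ)⁻¹ * ∑ z, qe (-(Q z)) with hc
  have hcard : (Fintype.card A : ℂ) ≠ 0 := Nat.cast_ne_zero.mpr Fintype.card_ne_zero
  have hphase : ∀ x y, qe (-polar Q x a) * qe (-polar Q y x) = qe (-polar Q x (a + y)) := by
    intro x y
    rw [← qe_add, hQ.polar_add_right, polar_comm y, neg_add]
  calc weilS Q (weilS Q v) a
      = c * ∑ x, qe (-polar Q x a) * (c * ∑ y, qe (-polar Q y x) * v y) := rfl
    _ = c ^ 2 * ∑ y, (∑ x, qe (-polar Q x (a + y))) * v y := by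
        simp_rw [← hphase, Finset.mul_sum, Finset.sum_mul, Finset.mul_sum]
        rw [Finset.sum_comm]
        exact Finset.sum_congr rfl fun y _ => Finset.sum_congr rfl fun x _ => by ring
    _ = c ^ 2 * ((Fintype.card A : ℂ) * v (-a)) := by
        simp_rw [hQ.sum_qe_neg_polar, ite_mul, zero_mul, add_eq_zero_iff_eq_neg',
          Finset.sum_ite_eq', Finset.mem_univ, if_true]
    _ = ((∑ z, qe (-(Q z))) ^ 2 / (Fintype.card A : ℂ)) * v (-a) := by
        rw [hc]
        field_simp

lemma weilS_pow_four (hQ : IsFQM Q) [Fintype A] :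
    weilS Q ^ 4 = ((∑ z, qe (-(Q z))) ^ 2 / (Fintype.card A : ℂ)) ^ 2 • LinearMap.id := by
  ext v a
  have hS4 : (weilS Q ^ 4) v = weilS Q (weilS Q (weilS Q (weilS Q v))) := rfl
  rw [hS4, hQ.weilS_sq_apply, hQ.weilS_sq_apply, neg_neg]
  simp only [LinearMap.smul_apply, LinearMap.id_apply, Pi.smul_apply, smul_eq_mul]
  ring

end IsFQM

end polar

/-- `S² v (a) = ((∑ e(-Q(z)))²/|A|)·v(-a)` for all `v ∈ ℂ[A]`; consequently `S⁴` is
the scalar operator `((∑ e(-Q(z)))²/|A|)²·id`. -/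
theorem stmt8 {A : Type*} [AddCommGroup A] [Fintype A]
    (Q : A → AddCircle (1 : ℚ)) (hQ : IsFQM Q) :
    (∀ (v : A → ℂ) (a : A),
      weilS Q (weilS Q v) a = ((∑ z, qe (-(Q z))) ^ 2 / (Fintype.card A : ℂ)) * v (-a)) ∧
    ((weilS Q) ^ 4 : (A → ℂ) →ₗ[ℂ] (A → ℂ)) =
      ((∑ z, qe (-(Q z))) ^ 2 / (Fintype.card A : ℂ)) ^ 2 • LinearMap.id :=
  ⟨hQ.weilS_sq_apply, hQ.weilS_pow_four⟩
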